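/- For d-dimensional isotropic Gaussians P = N(μ_P, σ_P² I_d) and Q = N(μ_Q, σ_Q² I_d) with ||μ_P − μ_Q||² < d(σ_P² − σ_Q²) (so in particular σ_P > σ_Q), the expected likelihood gap under the true model P, namely E_{x∼P}[log p(x)] − E_{x∼Q}[log p(x)] = H(Q) − H(P) + D_KL(Q||P), is strictly negative; i.e., the model assigns higher average log-likelihood to samples from Q than to samples from P. -/

import Mathlib

open MeasureTheory Real

/-- Density of the isotropic Gaussian `N(μ, σ² I_d)` on `ℝ^d`. -/
noncomputable def gaussPdf (d : ℕ) (μ : Fin d → ℝ) (σ : ℝ) : (Fin d → ℝ) → ℝ :=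
  fun x => (2 * Real.pi * σ ^ 2) ^ (-(d : ℝ) / 2) *
    Real.exp (-(∑ i, (x i - μ i) ^ 2) / (2 * σ ^ 2))


-- 1-d building block
noncomputable def g1 (μ σ : ℝ) (t : ℝ) : ℝ :=
  (2 * Real.pi * σ ^ 2) ^ (-(1 : ℝ) / 2) * Real.exp (-(t - μ) ^ 2 / (2 * σ ^ 2))

lemma integrable_sq_mul_exp {b : ℝ} (hb : 0 < b) :
    Integrable (fun x : ℝ => x ^ 2 * Real.exp (-b * x ^ 2)) := by
  have h := integrable_rpow_mul_exp_neg_mul_sq hb (s := 2) (by norm_num)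
  have : ∀ x : ℝ, x ^ (2 : ℝ) = x ^ (2 : ℕ) := fun x => by
    rw [show (2:ℝ) = ((2:ℕ):ℝ) by norm_num, Real.rpow_natCast]
  simpa [this] using h

lemma integral_sq_mul_exp {b : ℝ} (hb : 0 < b) :
    ∫ x : ℝ, x ^ 2 * Real.exp (-b * x ^ 2) = Real.sqrt (π / b) / (2 * b) := by
  have hint2 := integrable_sq_mul_exp hb
  have hd : ∀ x : ℝ, HasDerivAt (fun y : ℝ => y * Real.exp (-b * y ^ 2))
      (Real.exp (-b * x ^ 2) - 2 * b * (x ^ 2 * Real.exp (-b * x ^ 2))) x := by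
    intro x
    have h1 : HasDerivAt (fun y : ℝ => -b * y ^ 2) (-b * (2 * x)) x := by
      simpa using (hasDerivAt_pow 2 x).const_mul (-b)
    have := (hasDerivAt_id x).mul h1.exp
    refine this.congr_deriv ?_
    simp [id]; ring
  have h0 := integral_eq_zero_of_hasDerivAt_of_integrable hd
    ((integrable_exp_neg_mul_sq hb).sub (hint2.const_mul (2 * b)))
    (integrable_mul_exp_neg_mul_sq hb)
  rw [integral_sub (integrable_exp_neg_mul_sq hb) (hint2.const_mul (2 * b)),
    integral_const_mul, integral_gaussian] at h0
  have h2b : (2 : ℝ) * b ≠ 0 := by positivity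
  field_simp at h0 ⊢
  linarith

lemma integral_id_mul_exp {b : ℝ} (hb : 0 < b) :
    ∫ x : ℝ, x * Real.exp (-b * x ^ 2) = 0 := by
  have hd : ∀ x : ℝ, HasDerivAt (fun y : ℝ => -(1 / (2 * b)) * Real.exp (-b * y ^ 2))
      (x * Real.exp (-b * x ^ 2)) x := by
    intro x
    have h1 : HasDerivAt (fun y : ℝ => -b * y ^ 2) (-b * (2 * x)) x := by
      simpa using (hasDerivAt_pow 2 x).const_mul (-b)
    have := h1.exp.const_mul (-(1 / (2 * b)))
    refine this.congr_deriv ?_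
    field_simp
  exact integral_eq_zero_of_hasDerivAt_of_integrable hd
    (integrable_mul_exp_neg_mul_sq hb)
    ((integrable_exp_neg_mul_sq hb).const_mul _)

lemma g1_eq (μ : ℝ) {σ : ℝ} (hσ : 0 < σ) (t : ℝ) :
    g1 μ σ t = (Real.sqrt (2 * π * σ ^ 2))⁻¹ *
      Real.exp (-(2 * σ ^ 2)⁻¹ * (t - μ) ^ 2) := by
  unfold g1
  congr 1
  · rw [show (-(1:ℝ)/2) = -(1/2) by ring, Real.rpow_neg (by positivity), ← Real.sqrt_eq_rpow]
  · congr 1; field_simp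

lemma sqrt_pi_div {σ : ℝ} (hσ : 0 < σ) :
    (Real.sqrt (2 * π * σ ^ 2))⁻¹ * Real.sqrt (π / (2 * σ ^ 2)⁻¹) = 1 := by
  rw [show π / (2 * σ ^ 2)⁻¹ = 2 * π * σ ^ 2 by field_simp]
  exact inv_mul_cancel₀ (Real.sqrt_pos.mpr (by positivity)).ne'

lemma bpos {σ : ℝ} (hσ : 0 < σ) : 0 < (2 * σ ^ 2)⁻¹ := by positivity

lemma g1_integrable (μ : ℝ) {σ : ℝ} (hσ : 0 < σ) : Integrable (g1 μ σ) := by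
  have : g1 μ σ = fun t => (Real.sqrt (2 * π * σ ^ 2))⁻¹ *
      (fun y => Real.exp (-(2 * σ ^ 2)⁻¹ * y ^ 2)) (t - μ) := funext fun t => g1_eq μ hσ t
  rw [this]
  exact ((integrable_exp_neg_mul_sq (bpos hσ)).comp_sub_right μ).const_mul _

lemma g1_integral (μ : ℝ) {σ : ℝ} (hσ : 0 < σ) : ∫ t, g1 μ σ t = 1 := by
  simp_rw [g1_eq μ hσ]
  rw [integral_const_mul,
    integral_sub_right_eq_self (fun y => Real.exp (-(2 * σ ^ 2)⁻¹ * y ^ 2)) μ,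
    integral_gaussian]
  exact sqrt_pi_div hσ

noncomputable def hfun (c b a : ℝ) : ℝ → ℝ := fun y => c * Real.exp (-b * y ^ 2) * (y + a) ^ 2

lemma hfun_expand (c b a : ℝ) : hfun c b a = fun y =>
    c * (y ^ 2 * Real.exp (-b * y ^ 2)) + (2 * a * c) * (y * Real.exp (-b * y ^ 2))
      + (a ^ 2 * c) * Real.exp (-b * y ^ 2) := funext fun y => by unfold hfun; ring

lemma hfun_integrable (c : ℝ) {b : ℝ} (hb : 0 < b) (a : ℝ) : Integrable (hfun c b a) := by
  rw [hfun_expand]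
  exact (((integrable_sq_mul_exp hb).const_mul c).add
    ((integrable_mul_exp_neg_mul_sq hb).const_mul _)).add
    ((integrable_exp_neg_mul_sq hb).const_mul _)

lemma hfun_integral (c : ℝ) {b : ℝ} (hb : 0 < b) (a : ℝ) :
    ∫ y, hfun c b a y = c * Real.sqrt (π / b) / (2 * b) + a ^ 2 * (c * Real.sqrt (π / b)) := by
  simp only [hfun_expand]
  have h1 := integral_add (μ := volume) (((integrable_sq_mul_exp hb).const_mul c).add
      ((integrable_mul_exp_neg_mul_sq hb).const_mul (2 * a * c)))
      ((integrable_exp_neg_mul_sq hb).const_mul (a ^ 2 * c))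
  have h2 := integral_add (μ := volume) ((integrable_sq_mul_exp hb).const_mul c)
      ((integrable_mul_exp_neg_mul_sq hb).const_mul (2 * a * c))
  simp only [Pi.add_apply] at h1
  rw [h1, h2, integral_const_mul, integral_const_mul, integral_const_mul,
    integral_sq_mul_exp hb, integral_id_mul_exp hb, integral_gaussian]
  ring

lemma g1_sq_eq (μ ν : ℝ) {σ : ℝ} (hσ : 0 < σ) :
    (fun t => g1 μ σ t * (t - ν) ^ 2)
      = fun t => hfun (Real.sqrt (2 * π * σ ^ 2))⁻¹ (2 * σ ^ 2)⁻¹ (μ - ν) (t - μ) := by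
  funext t
  rw [g1_eq μ hσ]
  unfold hfun
  have : (t - ν) ^ 2 = ((t - μ) + (μ - ν)) ^ 2 := by ring
  rw [this]

lemma g1_sq_integrable (μ ν : ℝ) {σ : ℝ} (hσ : 0 < σ) :
    Integrable (fun t => g1 μ σ t * (t - ν) ^ 2) := by
  rw [g1_sq_eq μ ν hσ]
  exact (hfun_integrable _ (bpos hσ) _).comp_sub_right μ

lemma g1_moment (μ ν : ℝ) {σ : ℝ} (hσ : 0 < σ) :
    ∫ t, g1 μ σ t * (t - ν) ^ 2 = σ ^ 2 + (μ - ν) ^ 2 := by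
  rw [g1_sq_eq μ ν hσ, integral_sub_right_eq_self
      (hfun (Real.sqrt (2 * π * σ ^ 2))⁻¹ (2 * σ ^ 2)⁻¹ (μ - ν)) μ,
    hfun_integral _ (bpos hσ), sqrt_pi_div hσ]
  have h2 : (2 * (2 * σ ^ 2)⁻¹) = (σ ^ 2)⁻¹ := by field_simp
  rw [h2]
  field_simp


lemma gaussPdf_prod (d : ℕ) (μ : Fin d → ℝ) {σ : ℝ} (hσ : 0 < σ) (x : Fin d → ℝ) :
    gaussPdf d μ σ x = ∏ i, g1 (μ i) σ (x i) := by
  unfold gaussPdf g1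
  rw [Finset.prod_mul_distrib, Finset.prod_const, ← Real.exp_sum, Finset.card_univ,
    Fintype.card_fin]
  congr 1
  · rw [← Real.rpow_natCast ((2 * π * σ ^ 2) ^ (-(1:ℝ)/2)) d,
      ← Real.rpow_mul (by positivity)]
    congr 1
    push_cast; ring
  · congr 1
    simp only [neg_div, Finset.sum_div, Finset.sum_neg_distrib]

lemma log_gaussPdf (d : ℕ) (μP : Fin d → ℝ) {σP : ℝ} (hσP : 0 < σP) (x : Fin d → ℝ) :
    Real.log (gaussPdf d μP σP x)
      = (-(d:ℝ)/2) * Real.log (2 * π * σP ^ 2)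
        - (2 * σP ^ 2)⁻¹ * ∑ i, (x i - μP i) ^ 2 := by
  unfold gaussPdf
  rw [Real.log_mul (ne_of_gt (Real.rpow_pos_of_pos (by positivity) _)) (Real.exp_ne_zero _),
    Real.log_exp, Real.log_rpow (by positivity)]
  ring

noncomputable def hij (d : ℕ) (μ : Fin d → ℝ) (σ : ℝ) (μP : Fin d → ℝ) (i j : Fin d) : ℝ → ℝ :=
  if j = i then fun t => g1 (μ j) σ t * (t - μP j) ^ 2 else g1 (μ j) σ

lemma prod_hij (d : ℕ) (μ : Fin d → ℝ) (σ : ℝ) (μP : Fin d → ℝ) (i : Fin d) (x : Fin d → ℝ) :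
    ∏ j, hij d μ σ μP i j (x j) = (∏ j, g1 (μ j) σ (x j)) * (x i - μP i) ^ 2 := by
  have h : ∀ j, hij d μ σ μP i j (x j)
      = g1 (μ j) σ (x j) * (if j = i then (x j - μP j) ^ 2 else 1) := by
    intro j; unfold hij; split_ifs <;> simp
  simp only [h]
  rw [Finset.prod_mul_distrib, Finset.prod_ite_eq' Finset.univ i (fun j => (x j - μP j) ^ 2)]
  simp

lemma key (d : ℕ) (μ μP : Fin d → ℝ) {σ σP : ℝ} (hσ : 0 < σ) (hσP : 0 < σP) :
    ∫ x : Fin d → ℝ, gaussPdf d μ σ x * Real.log (gaussPdf d μP σP x)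
      = (-(d:ℝ)/2) * Real.log (2 * π * σP ^ 2)
        - (2 * σP ^ 2)⁻¹ * (d * σ ^ 2 + ∑ i, (μ i - μP i) ^ 2) := by
  have hreplace : ∀ x : Fin d → ℝ, gaussPdf d μ σ x * Real.log (gaussPdf d μP σP x)
      = (-(d:ℝ)/2) * Real.log (2 * π * σP ^ 2) * ∏ j, g1 (μ j) σ (x j)
        - (2 * σP ^ 2)⁻¹ * ∑ i, ∏ j, hij d μ σ μP i j (x j) := by
    intro x
    rw [log_gaussPdf d μP hσP x, gaussPdf_prod d μ hσ x]
    simp only [prod_hij d μ σ μP _ x]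
    rw [← Finset.mul_sum]
    ring
  simp only [hreplace]
  have hQ : Integrable (fun x : Fin d → ℝ => ∏ j, g1 (μ j) σ (x j)) :=
    Integrable.fintype_prod (fun j => g1_integrable (μ j) hσ)
  have hP : ∀ i, Integrable (fun x : Fin d → ℝ => ∏ j, hij d μ σ μP i j (x j)) := fun i =>
    Integrable.fintype_prod (fun j => by
      unfold hij; split_ifs
      exacts [g1_sq_integrable _ _ hσ, g1_integrable _ hσ])
  have h1 := integral_sub (μ := (volume : Measure (Fin d → ℝ)))
    (hQ.const_mul ((-(d:ℝ)/2) * Real.log (2 * π * σP ^ 2)))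
    ((integrable_finset_sum Finset.univ (fun i _ => hP i)).const_mul ((2 * σP ^ 2)⁻¹))
  rw [h1, integral_const_mul, integral_const_mul,
    integral_finset_sum Finset.univ (fun i _ => hP i)]
  have hQval : ∫ x : Fin d → ℝ, ∏ j, g1 (μ j) σ (x j) = 1 := by
    rw [MeasureTheory.integral_fintype_prod_volume_eq_prod (ι := Fin d) (fun j => g1 (μ j) σ)]
    simp [g1_integral _ hσ]
  have hPval : ∀ i, (∫ x : Fin d → ℝ, ∏ j, hij d μ σ μP i j (x j))
      = σ ^ 2 + (μ i - μP i) ^ 2 := by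
    intro i
    rw [MeasureTheory.integral_fintype_prod_volume_eq_prod (ι := Fin d) (fun j => hij d μ σ μP i j),
      Finset.prod_eq_single i ?h1 ?h2]
    · unfold hij; simp only [if_pos rfl]; exact g1_moment _ _ hσ
    · intro j _ hj; unfold hij; rw [if_neg hj]; exact g1_integral _ hσ
    · intro h; exact absurd (Finset.mem_univ i) h
  rw [hQval]
  simp only [hPval]
  rw [Finset.sum_add_distrib, Finset.sum_const, Finset.card_univ, Fintype.card_fin]
  push_cast; ring


/-- For isotropic Gaussians `P = N(μ_P, σ_P² I_d)`, `Q = N(μ_Q, σ_Q² I_d)` with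
`‖μ_P − μ_Q‖² < d(σ_P² − σ_Q²)`, the expected likelihood gap under the true model `P`,
`E_P[log p] − E_Q[log p] = D_KL(Q‖P) + H(Q) − H(P)`, is strictly negative: the model
assigns higher average log-likelihood to samples from `Q` than from `P`. -/
theorem gaussian_likelihood_gap_negative (d : ℕ) (hd : 0 < d)
    (μP μQ : Fin d → ℝ) (σP σQ : ℝ) (hσP : 0 < σP) (hσQ : 0 < σQ)
    (hlt : (∑ i, (μP i - μQ i) ^ 2) < d * (σP ^ 2 - σQ ^ 2)) :
    (∫ x : Fin d → ℝ, gaussPdf d μP σP x * Real.log (gaussPdf d μP σP x))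
        - (∫ x : Fin d → ℝ, gaussPdf d μQ σQ x * Real.log (gaussPdf d μP σP x))
      < 0 := by
  rw [key d μP μP hσP hσP, key d μQ μP hσQ hσP]
  have h0 : ∑ i, (μP i - μP i) ^ 2 = (0:ℝ) := by simp
  have hS : ∑ i, (μQ i - μP i) ^ 2 = ∑ i, (μP i - μQ i) ^ 2 :=
    Finset.sum_congr rfl (fun i _ => by ring)
  rw [h0, hS]
  have hinv : 0 < (2 * σP ^ 2)⁻¹ := by positivity
  have hneg : (∑ i, (μP i - μQ i) ^ 2) + (d:ℝ) * σQ ^ 2 - (d:ℝ) * σP ^ 2 < 0 := by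
    nlinarith [hlt]
  nlinarith [mul_pos hinv (show (0:ℝ) < (d:ℝ) * σP ^ 2 - ((d:ℝ) * σQ ^ 2 + ∑ i, (μP i - μQ i) ^ 2) by linarith)]
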